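/- arXiv:1508.05157 — 3 statements merged into one kernel-verified Lean document; each statement's English description precedes it below -/
import Mathlib

section
/- For a forest F with n vertices, the major index has the same distribution over all labelings as the inversion number: ∑_w q^{maj(F,w)} = ∑_w q^{inv(F,w)}. -/
open Finset

open scoped Classical

noncomputable section

variable {n : ℕ}

/-- `u <_F v` : strictly below in the forest order. -/
def strictR (r : Fin n → Fin n → Prop) (u v : Fin n) : Prop := r u v ∧ u ≠ v

/-- A naturally indexed plane forest structure on `Fin n`: a partial order whose
principal up-sets are chains (roots maximal), with natural indexing. -/
def IsForest (r : Fin n → Fin n → Prop) : Prop :=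
  IsPartialOrder (Fin n) r ∧ (∀ v u u', r v u → r v u' → r u u' ∨ r u' u) ∧
    ∀ u v, r u v → u ≤ v

/-- `h_v`: size of the principal order ideal generated by `v`. -/
def hook (r : Fin n → Fin n → Prop) (v : Fin n) : ℕ :=
  (univ.filter fun u => r u v).card

/-- q-integer `[m] = 1 + q + ... + q^(m-1)`. -/
def qInt {R : Type*} [CommRing R] (q : R) (m : ℕ) : R := ∑ i ∈ Finset.range m, q ^ i

/-- inversions of an (unsigned) labeling. -/
def invF (r : Fin n → Fin n → Prop) (w : Equiv.Perm (Fin n)) : ℕ :=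
  (univ.filter fun uv : Fin n × Fin n => strictR r uv.1 uv.2 ∧ w uv.2 < w uv.1).card

/-- a natural (order-preserving) labeling. -/
def NaturalL (r : Fin n → Fin n → Prop) (w : Equiv.Perm (Fin n)) : Prop :=
  ∀ u v, strictR r u v → w u < w v

/-- bottom-to-top maximum positions. -/
def BtmaxF (r : Fin n → Fin n → Prop) (w : Equiv.Perm (Fin n)) : Finset (Fin n) :=
  univ.filter fun v => ∀ u, strictR r u v → w u < w v

/-- label (in 1..n, with convention n+1 for roots) of the parent of `v`;
for a naturally indexed forest the parent of `v` is the minimal-index vertex strictly above `v`. -/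
def parentW (r : Fin n → Fin n → Prop) (w : Equiv.Perm (Fin n)) (v : Fin n) : ℕ :=
  if h : (univ.filter fun u => strictR r v u).Nonempty then
    (w ((univ.filter fun u => strictR r v u).min' h) : ℕ) + 1
  else n + 1

/-- major index: sum of hooks over descents. -/
def majF (r : Fin n → Fin n → Prop) (w : Equiv.Perm (Fin n)) : ℕ :=
  ∑ v ∈ univ.filter (fun v => parentW r w v < (w v : ℕ) + 1), hook r v

/-- M-code of a labeled forest. -/
def mcodeF (r : Fin n → Fin n → Prop) (w : Equiv.Perm (Fin n)) (i : Fin n) : ℕ :=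
  if (w i : ℕ) + 1 < parentW r w i then
    (univ.filter fun u => strictR r u i ∧ (w i : ℕ) + 1 ≤ (w u : ℕ) + 1 ∧
      (w u : ℕ) + 1 ≤ parentW r w i).card
  else
    (univ.filter fun u => strictR r u i ∧ ¬(parentW r w i ≤ (w u : ℕ) + 1 ∧
      (w u : ℕ) + 1 ≤ (w i : ℕ) + 1)).card

/-- cyclic bottom-to-top maxima. -/
def CbtmaxF (r : Fin n → Fin n → Prop) (w : Equiv.Perm (Fin n)) : Finset (Fin n) :=
  univ.filter fun v =>
    if (w v : ℕ) + 1 < parentW r w v then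
      ∀ u, strictR r u v → ¬((w v : ℕ) + 1 ≤ (w u : ℕ) + 1 ∧ (w u : ℕ) + 1 ≤ parentW r w v)
    else
      ∀ u, strictR r u v → (parentW r w v ≤ (w u : ℕ) + 1 ∧ (w u : ℕ) + 1 ≤ (w v : ℕ) + 1)

/-! ### Signed labelings, encoded as a permutation together with a sign function.
`wVal (σ, ε)` is the corresponding signed labeling `V(F) → {±1, …, ±n}`;
this is a bijective encoding of the set `W_B(F)` of signed labelings. -/

def wVal (p : Equiv.Perm (Fin n) × (Fin n → Bool)) (v : Fin n) : ℤ :=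
  (if p.2 v then -1 else 1) * ((p.1 v : ℤ) + 1)

/-- number of negative labels. -/
def n1F (w : Fin n → ℤ) : ℕ := (univ.filter fun v => w v < 0).card

/-- inversions of a signed labeling. -/
def invSF (r : Fin n → Fin n → Prop) (w : Fin n → ℤ) : ℕ :=
  (univ.filter fun uv : Fin n × Fin n => strictR r uv.1 uv.2 ∧ w uv.2 < w uv.1).card

def n2F (r : Fin n → Fin n → Prop) (w : Fin n → ℤ) : ℕ :=
  (univ.filter fun uv : Fin n × Fin n => strictR r uv.1 uv.2 ∧ w uv.1 + w uv.2 < 0).card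

def invBF (r : Fin n → Fin n → Prop) (w : Fin n → ℤ) : ℕ := invSF r w + n1F w + n2F r w

def invDF (r : Fin n → Fin n → Prop) (w : Fin n → ℤ) : ℕ := invSF r w + n2F r w

/-- the A-code of a signed labeled forest. -/
def acodeF (r : Fin n → Fin n → Prop) (w : Fin n → ℤ) (i : Fin n) : ℕ :=
  (univ.filter fun u => strictR r u i ∧ w i < w u).card +
  (univ.filter fun u => strictR r u i ∧ w u + w i < 0).card +
  (if w i < 0 then 1 else 0)

/-- signed bottom-to-top maximum positions. -/
def BtmaxBF (r : Fin n → Fin n → Prop) (w : Fin n → ℤ) : Finset (Fin n) :=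
  univ.filter fun v => 0 < w v ∧ ∀ u, strictR r u v → |w u| < w v

def leafF (r : Fin n → Fin n → Prop) (v : Fin n) : Prop := ∀ u, ¬ strictR r u v

/-- type D bottom-to-top maximum positions. -/
def BtmaxDF (r : Fin n → Fin n → Prop) (w : Fin n → ℤ) : Finset (Fin n) :=
  univ.filter fun v => ¬ leafF r v ∧ 0 < w v ∧ ∀ u, strictR r u v → |w u| < w v

/-! ### The map φ: one sorting step towards a natural labeling, recording the A-code. -/

def stepA (r : Fin n → Fin n → Prop) (i : Fin n) (w : Fin n → ℤ) : Fin n → ℤ :=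
  let A := (univ.filter fun u => r u i).image fun u => (w u).natAbs
  let M := A.max.getD 0
  let l := (A.erase M).sort (· ≤ ·)
  fun u =>
    if u = i then (M : ℤ)
    else if strictR r u i then
      (if w u < 0 then -1 else 1) *
        (l.getD ((univ.filter fun u' => strictR r u' i ∧ (w u').natAbs < (w u).natAbs).card) 0)
    else w u

/-- processing vertices `v_n, v_{n-1}, …, v_1` yields the natural labeling `w'`. -/
def sortA (r : Fin n → Fin n → Prop) (w : Fin n → ℤ) : Fin n → ℤ :=
  ((List.finRange n).reverse).foldl (fun w i => stepA r i w) w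

/-! ### The sorting algorithm for the sorting index. -/

/-- standardized label of `x` in the subtree rooted at `u`. -/
def stdVal (r : Fin n → Fin n → Prop) (u : Fin n) (w : Fin n → ℤ) (x : Fin n) : ℤ :=
  (if w x < 0 then -1 else 1) * (((univ.filter fun y => r y u ∧ |w y| < |w x|).card : ℤ) + 1)

/-- one step of the forest sorting algorithm (placing value `i+1`); the state is
(current labeling, recorded B-code, running total). -/
def sortStepB (r : Fin n → Fin n → Prop) (i : Fin n)
    (s : (Fin n → ℤ) × (Fin n → ℤ) × ℤ) : (Fin n → ℤ) × (Fin n → ℤ) × ℤ :=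
  let w := s.1
  let v := ((univ.filter fun x => |w x| = (i : ℤ) + 1).max).getD i
  let u := ((univ.filter fun x => r v x ∧ |w x| ≤ (i : ℤ) + 1).max).getD i
  let amt : ℤ := |stdVal r u w v| - stdVal r u w u - (if w u < 0 then 1 else 0)
  let w' := if 0 < w v then Function.update (Function.update w u (w v)) v (w u)
            else Function.update (Function.update w u (-(w v))) v (-(w u))
  (w', Function.update s.2.1 u amt, s.2.2 + amt)

def runB (r : Fin n → Fin n → Prop) (w : Fin n → ℤ) : (Fin n → ℤ) × (Fin n → ℤ) × ℤ :=
  ((List.finRange n).reverse).foldl (fun s i => sortStepB r i s) (w, fun _ => (0 : ℤ), 0)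

/-- the natural labeling produced by the sorting algorithm. -/
def sortedB (r : Fin n → Fin n → Prop) (w : Fin n → ℤ) : Fin n → ℤ := (runB r w).1

/-- B-code: `b_i` = amount contributed at the step in which `u = v_i`. -/
def bcodeB (r : Fin n → Fin n → Prop) (w : Fin n → ℤ) : Fin n → ℤ := (runB r w).2.1

/-- the sorting index of a signed labeled forest. -/
def sorBF (r : Fin n → Fin n → Prop) (w : Fin n → ℤ) : ℤ := (runB r w).2.2

/-! ### Cycles of signed permutations. -/

/-- the extension of `g : Fin n → ℤ` (a signed permutation written in one-line notation,
`g i` = image of `i+1`) to `{±1, …, ±n} ⊆ ℤ`. -/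
def extB (g : Fin n → ℤ) : ℤ → ℤ := fun k =>
  if h : 0 < k ∧ k ≤ (n : ℤ) then g ⟨k.toNat - 1, by omega⟩
  else if h' : -(n : ℤ) ≤ k ∧ k < 0 then -g ⟨(-k).toNat - 1, by omega⟩
  else k

/-- absolute values of the minimal-in-absolute-value elements of balanced cycles. -/
def CycBperm (g : Fin n → ℤ) : Finset ℕ :=
  (Finset.Icc 1 n).filter fun m =>
    (∀ j, j ≤ 2 * n → (extB g)^[j] (m : ℤ) ≠ -(m : ℤ)) ∧
    ∀ j, j ≤ 2 * n → (m : ℤ) ≤ |(extB g)^[j] (m : ℤ)|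

/-- the signed permutation `w ∘ w'⁻¹`, where `w'` is the sorted (natural) labeling. -/
def gOf (r : Fin n → Fin n → Prop) (w : Fin n → ℤ) : Fin n → ℤ := fun i =>
  w (((univ.filter fun v => sortedB r w v = (i : ℤ) + 1).max).getD i)

/-- type B minimal cycle vertices of a signed labeled forest. -/
def CycBF (r : Fin n → Fin n → Prop) (w : Fin n → ℤ) : Finset (Fin n) :=
  univ.filter fun v => (sortedB r w v).toNat ∈ CycBperm (gOf r w)

/-! ### Signed permutations as words. -/

/-- the inverse of the signed permutation `g`. -/
def ginv (g : Fin n → ℤ) (i : Fin n) : ℤ :=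
  let j := ((univ.filter fun x => |g x| = (i : ℤ) + 1).max).getD i
  if 0 < g j then (j : ℤ) + 1 else -((j : ℤ) + 1)

def invP (σ : Equiv.Perm (Fin n)) : ℕ :=
  (univ.filter fun ij : Fin n × Fin n => ij.1 < ij.2 ∧ σ ij.2 < σ ij.1).card

def invL (g : Fin n → ℤ) : ℕ :=
  (univ.filter fun ij : Fin n × Fin n => ij.1 < ij.2 ∧ g ij.2 < g ij.1).card

def n2L (g : Fin n → ℤ) : ℕ :=
  (univ.filter fun ij : Fin n × Fin n => ij.1 < ij.2 ∧ g ij.1 + g ij.2 < 0).card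

/-- one step of Straight Selection Sort for signed permutations (placing value `i+1`). -/
def sorStepP (i : Fin n) (s : (Fin n → ℤ) × ℤ) : (Fin n → ℤ) × ℤ :=
  let g := s.1
  let j := ((univ.filter fun x => |g x| = (i : ℤ) + 1).max).getD i
  let amt : ℤ := if 0 < g j then ((i : ℤ) + 1) - ((j : ℤ) + 1)
                 else ((i : ℤ) + 1) + ((j : ℤ) + 1) - 1
  let g' := if 0 < g j then Function.update (Function.update g j (g i)) i (g j)
            else Function.update (Function.update g j (-(g i))) i (-(g j))
  (g', s.2 + amt)

/-- the sorting index of a signed permutation. -/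
def sorBperm (g : Fin n → ℤ) : ℤ :=
  (((List.finRange n).reverse).foldl (fun s i => sorStepP i s) (g, 0)).2

end

/-!
Induct on the number of vertices, removing the last vertex, which is a root. If it gets the
label `j` and the rest is labelled by `w`, the inversion number grows by the number of vertices
of its subtree `E` with `j ≤ w u`, and the major index by the hooks of its children with
`j ≤ w u`. Among the `w` with a fixed label set `B = w(E)`, moving the labels `≥ j` of `B` below
the others is a bijection turning the second increment into the first: the descents change only
at the edges crossing the boundary of the moved set, and there the hooks telescope by
`h_x = 1 + ∑_c h_c` over the children `c` of `x`. As the induction hypothesis is needed on such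
restricted sets of labelings, the equidistribution is proved on every class of labelings with
prescribed label sets on the colour classes of a colouring that is constant on trees.
-/
theorem exists_perm_lt_iff_of_injOn {α β : Type*} [LinearOrder α] [LinearOrder β]
    (B : Finset α) {f : α → β} (hf : Set.InjOn f B) :
    ∃ σ : Equiv.Perm α, (∀ a ∉ B, σ a = a) ∧ ∀ a ∈ B, ∀ b ∈ B, σ a < σ b ↔ f a < f b := by
  let eB := B.orderIsoOfFin rfl
  let eF := (B.image f).orderIsoOfFin (card_image_of_injOn hf)
  let τ : B → B := fun a => eB (eF.symm ⟨f a, mem_image_of_mem f a.2⟩)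
  have hτ : Function.Injective τ := fun a b h =>
    Subtype.ext (hf a.2 b.2 (congrArg Subtype.val (eF.symm.injective (eB.injective h))))
  refine ⟨Equiv.Perm.ofSubtype (Equiv.ofBijective τ (Finite.injective_iff_bijective.1 hτ)),
    fun a ha => Equiv.Perm.ofSubtype_apply_of_not_mem _ ha, fun a ha b hb => ?_⟩
  rw [Equiv.Perm.ofSubtype_apply_of_mem _ ha, Equiv.Perm.ofSubtype_apply_of_mem _ hb]
  change eB _ < eB _ ↔ _
  rw [eB.lt_iff_lt, eF.symm.lt_iff_lt]
  rfl

section Forest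

variable {n : ℕ} {r : Fin n → Fin n → Prop}

namespace IsForest

theorem refl (hF : IsForest r) (v : Fin n) : r v v := hF.1.toIsPreorder.toRefl.refl v

theorem trans (hF : IsForest r) {a b c : Fin n} (hab : r a b) (hbc : r b c) : r a c :=
  hF.1.toIsPreorder.toIsTrans.trans _ _ _ hab hbc

theorem antisymm (hF : IsForest r) {a b : Fin n} (hab : r a b) (hba : r b a) : a = b :=
  hF.1.toAntisymm.antisymm _ _ hab hba

theorem le_of_rel (hF : IsForest r) {a b : Fin n} (hab : r a b) : a ≤ b := hF.2.2 _ _ hab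

theorem rel_total (hF : IsForest r) {v a b : Fin n} (ha : r v a) (hb : r v b) :
    r a b ∨ r b a :=
  hF.2.1 v a b ha hb

end IsForest

def IsParent (r : Fin n → Fin n → Prop) (v p : Fin n) : Prop :=
  strictR r v p ∧ ∀ u, strictR r v u → r p u

def IsRoot (r : Fin n → Fin n → Prop) (v : Fin n) : Prop := ∀ u, ¬ strictR r v u

noncomputable def des (r : Fin n → Fin n → Prop) (w : Equiv.Perm (Fin n)) : Finset (Fin n) :=
  univ.filter fun v => ∃ p, IsParent r v p ∧ w p < w v

theorem IsParent.eq (hF : IsForest r) {v p p' : Fin n} (hp : IsParent r v p)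
    (hp' : IsParent r v p') : p = p' :=
  hF.antisymm (hp.2 _ hp'.1) (hp'.2 _ hp.1)

theorem IsParent.not_isRoot {v p : Fin n} (hp : IsParent r v p) : ¬ IsRoot r v :=
  fun hv => hv p hp.1

/-- Ancestors form a chain on which `r` agrees with the order of indices, so the
strict ancestor of least index is the parent. -/
theorem isParent_min' (hF : IsForest r) {v : Fin n}
    (h : (univ.filter fun u => strictR r v u).Nonempty) :
    IsParent r v ((univ.filter fun u => strictR r v u).min' h) := by
  have hp := (mem_filter.1 ((univ.filter fun u => strictR r v u).min'_mem h)).2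
  refine ⟨hp, fun u hu => ?_⟩
  rcases hF.rel_total hp.1 hu.1 with hpu | hup
  · exact hpu
  · have hle := min'_le _ u (mem_filter.2 ⟨mem_univ _, hu⟩)
    rw [le_antisymm hle (hF.le_of_rel hup)]
    exact hF.refl u

theorem isRoot_or_exists_isParent (hF : IsForest r) (v : Fin n) :
    IsRoot r v ∨ ∃ p, IsParent r v p := by
  by_cases h : (univ.filter fun u => strictR r v u).Nonempty
  · exact Or.inr ⟨_, isParent_min' hF h⟩
  · exact Or.inl fun u hu => h ⟨u, mem_filter.2 ⟨mem_univ _, hu⟩⟩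

theorem majF_eq_sum_des (hF : IsForest r) (w : Equiv.Perm (Fin n)) :
    majF r w = ∑ v ∈ des r w, hook r v := by
  refine sum_congr (filter_congr fun v _ => ?_) fun _ _ => rfl
  unfold parentW
  split_ifs with h
  · constructor
    · exact fun hlt => ⟨_, isParent_min' hF h, Fin.lt_def.2 (by omega)⟩
    · rintro ⟨p, hp, hlt⟩
      rw [← hp.eq hF (isParent_min' hF h)]
      exact Nat.succ_lt_succ hlt
  · refine ⟨fun hlt => absurd hlt (by omega), ?_⟩
    rintro ⟨p, hp, -⟩
    exact absurd ⟨p, mem_filter.2 ⟨mem_univ _, hp.1⟩⟩ h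

theorem exists_isParent_rel_of_strictR (hF : IsForest r) {u x : Fin n} (hux : strictR r u x) :
    ∃ c, IsParent r c x ∧ r u c := by
  obtain ⟨c, hcS, hmax⟩ := (univ.filter fun z => r u z ∧ strictR r z x).exists_max_image id
    ⟨u, mem_filter.2 ⟨mem_univ _, hF.refl u, hux⟩⟩
  obtain ⟨huc, hcx⟩ := (mem_filter.1 hcS).2
  refine ⟨c, ⟨hcx, fun y hcy => ?_⟩, huc⟩
  rcases hF.rel_total hux.1 (hF.trans huc hcy.1) with hxy | hyx
  · exact hxy
  · by_cases hyx' : y = x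
    · exact hyx' ▸ hF.refl y
    · have hyc := hmax y (mem_filter.2 ⟨mem_univ _, hF.trans huc hcy.1, hyx, hyx'⟩)
      exact absurd (lt_of_le_of_ne (hF.le_of_rel hcy.1) hcy.2) (not_lt.2 hyc)

theorem IsParent.eq_of_rel (hF : IsForest r) {c c' x : Fin n} (hc : IsParent r c x)
    (hc' : IsParent r c' x) (hcc' : r c c') : c = c' := by
  by_contra hne
  exact hc'.1.2 (hF.antisymm hc'.1.1 (hc.2 c' ⟨hcc', hne⟩))

theorem hook_eq_one_add_sum_hook_children (hF : IsForest r) (x : Fin n) :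
    hook r x = 1 + ∑ c ∈ univ.filter (IsParent r · x), hook r c := by
  have hdown : (univ.filter fun u => r u x) =
      insert x ((univ.filter (IsParent r · x)).biUnion fun c => univ.filter fun u => r u c) := by
    ext u
    simp only [mem_filter, mem_univ, true_and, mem_insert, mem_biUnion]
    constructor
    · intro hux
      by_cases hu : u = x
      · exact Or.inl hu
      · exact Or.inr (exists_isParent_rel_of_strictR hF ⟨hux, hu⟩)
    · rintro (rfl | ⟨c, hc, huc⟩)
      · exact hF.refl u
      · exact hF.trans huc hc.1.1
  have hdisj : (univ.filter (IsParent r · x) : Set (Fin n)).PairwiseDisjoint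
      fun c => univ.filter fun u => r u c := by
    intro c hc c' hc' hne
    replace hc : IsParent r c x := by simpa using hc
    replace hc' : IsParent r c' x := by simpa using hc'
    refine disjoint_left.2 fun u hu hu' => hne ?_
    simp only [mem_filter, mem_univ, true_and] at hu hu'
    rcases hF.rel_total hu hu' with h | h
    · exact hc.eq_of_rel hF hc' h
    · exact (hc'.eq_of_rel hF hc h).symm
  have hx : x ∉ (univ.filter (IsParent r · x)).biUnion fun c => univ.filter fun u => r u c := by
    simp only [mem_biUnion, mem_filter, mem_univ, true_and, not_exists, not_and]
    exact fun c hc hxc => hc.1.2 (hF.antisymm hc.1.1 hxc)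
  rw [hook, hdown, card_insert_of_notMem hx, card_biUnion hdisj, add_comm]
  rfl

theorem sum_hook_eq_card_add_sum_hook_children (hF : IsForest r) (U : Finset (Fin n)) :
    ∑ x ∈ U, hook r x =
      #U + ∑ v ∈ univ.filter (fun v => ∃ p ∈ U, IsParent r v p), hook r v := by
  have hchildren : (univ.filter fun v => ∃ p ∈ U, IsParent r v p) =
      U.biUnion fun x => univ.filter (IsParent r · x) := by
    ext v
    simp
  have hdisj : (U : Set (Fin n)).PairwiseDisjoint fun x => univ.filter (IsParent r · x) :=
    fun x _ x' _ hne => disjoint_left.2 fun v hv hv' =>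
      hne ((mem_filter.1 hv).2.eq hF (mem_filter.1 hv').2)
  rw [hchildren, sum_biUnion hdisj, card_eq_sum_ones, ← sum_add_distrib]
  exact sum_congr rfl fun x _ => hook_eq_one_add_sum_hook_children hF x

/-- The descents change only at the edges crossing the boundary of `U`, and their hooks
telescope by `hook_eq_one_add_sum_hook_children`. -/
theorem majF_add_card_eq (hF : IsForest r) {w w' : Equiv.Perm (Fin n)} {U : Finset (Fin n)}
    (hdes : ∀ v p, IsParent r v p → (w' p < w' v ↔ (w p < w v ↔ (v ∈ U ↔ p ∈ U))))
    (hcross : ∀ v p, IsParent r v p → (v ∈ U ↔ p ∉ U) → (w p < w v ↔ v ∈ U)) :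
    majF r w' + #U = majF r w + ∑ u ∈ U.filter (IsRoot r), hook r u := by
  have hpoint : ∀ v, (if v ∈ des r w' then hook r v else 0) + (if v ∈ U then hook r v else 0) =
      (if v ∈ des r w then hook r v else 0) +
        (if v ∈ univ.filter (fun v => ∃ p ∈ U, IsParent r v p) then hook r v else 0) +
        (if v ∈ U.filter (IsRoot r) then hook r v else 0) := by
    intro v
    rcases isRoot_or_exists_isParent hF v with hv | ⟨p, hp⟩
    · have hnp : ∀ p, ¬ IsParent r v p := fun p hp => hp.not_isRoot hv
      simp [des, hnp, hv]
    · have hpar : ∀ p', IsParent r v p' ↔ p' = p := fun p' => ⟨fun h => h.eq hF hp, (· ▸ hp)⟩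
      have hcross' := hcross v p hp
      simp only [des, mem_filter, mem_univ, true_and, hpar, exists_eq_left, exists_eq_right,
        hp.not_isRoot, and_false, if_false, add_zero, hdes v p hp]
      by_cases hv : v ∈ U <;> by_cases hpU : p ∈ U <;> simp_all
  have hsum := sum_congr rfl fun v (_ : v ∈ univ) => hpoint v
  simp only [sum_add_distrib, sum_ite_mem, univ_inter] at hsum
  rw [majF_eq_sum_des hF, majF_eq_sum_des hF]
  have hhook := sum_hook_eq_card_add_sum_hook_children hF U
  omega

/-- `σ` moves the labels `≥ c` in `B` below the other labels in `B`, keeping the order within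
both groups. -/
theorem exists_perm_majF_mul_add_card (hF : IsForest r) {E : Finset (Fin n)}
    (hE : ∀ u v, r u v → (u ∈ E ↔ v ∈ E)) (B : Finset (Fin n)) (c : ℕ) :
    ∃ σ : Equiv.Perm (Fin n), (∀ a ∉ B, σ a = a) ∧ ∀ w : Equiv.Perm (Fin n), E.image w = B →
      majF r (σ * w) + #(E.filter fun u => c ≤ (w u : ℕ)) =
        majF r w + ∑ u ∈ E.filter (fun u => IsRoot r u ∧ c ≤ (w u : ℕ)), hook r u := by
  obtain ⟨σ, hσB, hσ⟩ := exists_perm_lt_iff_of_injOn B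
    (f := fun a : Fin n => toLex ((a : ℕ) < c, a)) fun a _ b _ h => (Prod.ext_iff.1 h).2
  refine ⟨σ, hσB, fun w hw => ?_⟩
  have hmem : ∀ v, w v ∈ B ↔ v ∈ E := fun v => hw ▸ w.injective.mem_finset_image
  have hU : ∀ v, v ∈ E.filter (fun u => c ≤ (w u : ℕ)) ↔ v ∈ E ∧ c ≤ (w v : ℕ) :=
    fun v => mem_filter
  rw [majF_add_card_eq hF (w := w) (fun v p hp => ?_) (fun v p hp hcross => ?_), filter_filter]
  · simp_rw [and_comm]
  · simp only [Equiv.Perm.mul_apply, hU]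
    by_cases hv : v ∈ E
    · have hp' : p ∈ E := (hE v p hp.1.1).1 hv
      rw [hσ _ ((hmem p).2 hp') _ ((hmem v).2 hv), Prod.Lex.toLex_lt_toLex]
      simp only [lt_iff_le_not_ge, le_Prop_eq, Fin.le_def, eq_iff_iff, hv, hp', true_and]
      omega
    · have hp' : p ∉ E := fun h => hv ((hE v p hp.1.1).2 h)
      simp [hσB _ (mt (hmem v).1 hv), hσB _ (mt (hmem p).1 hp'), hv, hp']
  · simp only [hU] at hcross ⊢
    have hv : v ∈ E :=
      by_contra fun hv => hv (hcross.2 fun h => hv ((hE v p hp.1.1).2 h.1)).1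
    have hp' : p ∈ E := (hE v p hp.1.1).1 hv
    simp only [hv, hp', true_and] at hcross ⊢
    rw [Fin.lt_def]
    omega

end Forest

section RemoveLast

variable {N : ℕ} {r : Fin (N + 1) → Fin (N + 1) → Prop}

def dropLast (r : Fin (N + 1) → Fin (N + 1) → Prop) : Fin N → Fin N → Prop :=
  fun u v => r u.castSucc v.castSucc

noncomputable def subtreeLast (r : Fin (N + 1) → Fin (N + 1) → Prop) : Finset (Fin N) :=
  univ.filter fun u => r u.castSucc (Fin.last N)

theorem IsForest.dropLast (hF : IsForest r) : IsForest (dropLast r) :=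
  ⟨{ refl := fun _ => hF.refl _
     trans := fun _ _ _ => hF.trans
     antisymm := fun _ _ h h' => Fin.castSucc_injective _ (hF.antisymm h h') },
    fun _ _ _ => hF.rel_total, fun _ _ h => Fin.castSucc_le_castSucc_iff.1 (hF.le_of_rel h)⟩

theorem strictR_dropLast {u v : Fin N} :
    strictR (dropLast r) u v ↔ strictR r u.castSucc v.castSucc :=
  and_congr Iff.rfl (Fin.castSucc_injective _).ne_iff.symm

theorem not_rel_last_castSucc (hF : IsForest r) (v : Fin N) : ¬ r (Fin.last N) v.castSucc :=
  fun h => (Fin.castSucc_lt_last v).not_ge (hF.le_of_rel h)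

theorem strictR_castSucc_last_iff {v : Fin N} :
    strictR r v.castSucc (Fin.last N) ↔ v ∈ subtreeLast r := by
  simp [strictR, subtreeLast, (Fin.castSucc_lt_last v).ne]

theorem not_strictR_last (hF : IsForest r) (v : Fin (N + 1)) : ¬ strictR r (Fin.last N) v :=
  fun h => h.2 (le_antisymm (hF.le_of_rel h.1) (Fin.le_last v))

theorem mem_subtreeLast_iff_of_rel (hF : IsForest r) {u v : Fin N} (h : dropLast r u v) :
    u ∈ subtreeLast r ↔ v ∈ subtreeLast r := by
  simp only [subtreeLast, mem_filter, mem_univ, true_and]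
  refine ⟨fun hu => ?_, hF.trans h⟩
  exact (hF.rel_total h hu).resolve_right (not_rel_last_castSucc hF v)

theorem isParent_castSucc_iff (hF : IsForest r) {v p : Fin N} :
    IsParent r v.castSucc p.castSucc ↔ IsParent (dropLast r) v p := by
  simp only [IsParent, Fin.forall_fin_succ', strictR_dropLast]
  refine ⟨fun h => ⟨h.1, h.2.1⟩, fun h => ⟨h.1, h.2, fun hlast => ?_⟩⟩
  exact (hF.rel_total h.1.1 hlast.1).resolve_right (not_rel_last_castSucc hF p)

theorem isParent_last_iff (hF : IsForest r) {v : Fin N} :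
    IsParent r v.castSucc (Fin.last N) ↔ v ∈ subtreeLast r ∧ IsRoot (dropLast r) v := by
  simp only [IsParent, IsRoot, Fin.forall_fin_succ', strictR_castSucc_last_iff,
    strictR_dropLast, not_rel_last_castSucc hF, imp_false]
  exact ⟨fun h => ⟨h.1, h.2.1⟩, fun h => ⟨h.1, h.2, fun _ => hF.refl _⟩⟩

theorem hook_castSucc (hF : IsForest r) (v : Fin N) : hook r v.castSucc = hook (dropLast r) v := by
  have : (univ.filter fun u => r u v.castSucc) =
      (univ.filter fun u => dropLast r u v).image Fin.castSucc := by
    ext u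
    induction u using Fin.lastCases with
    | last => simp [not_rel_last_castSucc hF]
    | cast u =>
      simp only [mem_filter, mem_univ, true_and, mem_image, Fin.castSucc_inj, exists_eq_right]
      rfl
  rw [hook, this, card_image_of_injective _ (Fin.castSucc_injective N)]
  rfl

def insertLabel (j : Fin (N + 1)) (w : Equiv.Perm (Fin N)) : Equiv.Perm (Fin (N + 1)) :=
  finSuccEquivLast.trans (w.optionCongr.trans (finSuccEquiv' j).symm)

@[simp]
theorem insertLabel_castSucc (j : Fin (N + 1)) (w : Equiv.Perm (Fin N)) (v : Fin N) :
    insertLabel j w v.castSucc = j.succAbove (w v) := by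
  simp [insertLabel]

@[simp]
theorem insertLabel_last (j : Fin (N + 1)) (w : Equiv.Perm (Fin N)) :
    insertLabel j w (Fin.last N) = j := by
  simp [insertLabel]

theorem lt_succAbove_iff_le_val (j : Fin (N + 1)) (a : Fin N) :
    j < j.succAbove a ↔ (j : ℕ) ≤ a := by
  rw [Fin.lt_succAbove_iff_le_castSucc, Fin.le_def, Fin.val_castSucc]

theorem mem_des_insertLabel_castSucc (hF : IsForest r) (j : Fin (N + 1))
    (w : Equiv.Perm (Fin N)) (v : Fin N) :
    v.castSucc ∈ des r (insertLabel j w) ↔ v ∈ des (dropLast r) w ∨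
      v ∈ (subtreeLast r).filter fun u => IsRoot (dropLast r) u ∧ (j : ℕ) ≤ w u := by
  simp only [des, mem_filter, mem_univ, true_and, Fin.exists_fin_succ', isParent_castSucc_iff hF,
    isParent_last_iff hF, insertLabel_castSucc, insertLabel_last, Fin.succAbove_lt_succAbove_iff,
    lt_succAbove_iff_le_val, and_assoc]

theorem last_notMem_des (hF : IsForest r) (w : Equiv.Perm (Fin (N + 1))) :
    Fin.last N ∉ des r w := by
  simp only [des, mem_filter, mem_univ, true_and, not_exists, not_and]
  exact fun p hp => absurd hp.1 (not_strictR_last hF p)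

theorem majF_insertLabel (hF : IsForest r) (j : Fin (N + 1)) (w : Equiv.Perm (Fin N)) :
    majF r (insertLabel j w) = majF (dropLast r) w +
      ∑ u ∈ (subtreeLast r).filter (fun u => IsRoot (dropLast r) u ∧ (j : ℕ) ≤ w u),
        hook (dropLast r) u := by
  set X := (subtreeLast r).filter fun u => IsRoot (dropLast r) u ∧ (j : ℕ) ≤ w u
  have hsplit : ∀ v, (if v ∈ des (dropLast r) w ∨ v ∈ X then hook (dropLast r) v else 0) =
      (if v ∈ des (dropLast r) w then hook (dropLast r) v else 0) +
        (if v ∈ X then hook (dropLast r) v else 0) := by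
    intro v
    have hdisj : ¬ (v ∈ des (dropLast r) w ∧ v ∈ X) := by
      rintro ⟨hd, hx⟩
      obtain ⟨p, hp, -⟩ := (mem_filter.1 hd).2
      exact hp.not_isRoot (mem_filter.1 hx).2.1
    by_cases hd : v ∈ des (dropLast r) w <;> by_cases hx : v ∈ X <;> simp_all
  rw [majF_eq_sum_des hF, majF_eq_sum_des hF.dropLast, ← univ_inter (des r _), ← sum_ite_mem,
    Fin.sum_univ_castSucc]
  simp only [mem_des_insertLabel_castSucc hF, last_notMem_des hF, if_false, add_zero,
    hook_castSucc hF]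
  change (∑ v, if v ∈ des (dropLast r) w ∨ v ∈ X then _ else 0) = _
  simp only [hsplit, sum_add_distrib, sum_ite_mem, univ_inter]

theorem invF_insertLabel (hF : IsForest r) (j : Fin (N + 1)) (w : Equiv.Perm (Fin N)) :
    invF r (insertLabel j w) =
      invF (dropLast r) w + #((subtreeLast r).filter fun u => (j : ℕ) ≤ w u) := by
  simp only [invF, subtreeLast, filter_filter, card_filter, Fintype.sum_prod_type,
    Fin.sum_univ_castSucc, insertLabel_castSucc, insertLabel_last, not_strictR_last hF,
    false_and, if_false, sum_const_zero, add_zero, strictR_castSucc_last_iff,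
    Fin.succAbove_lt_succAbove_iff, lt_succAbove_iff_le_val, sum_add_distrib, strictR_dropLast,
    mem_filter, mem_univ, true_and]

theorem bijective_insertLabel :
    Function.Bijective fun p : Fin (N + 1) × Equiv.Perm (Fin N) => insertLabel p.1 p.2 := by
  refine (Fintype.bijective_iff_injective_and_card _).2 ⟨fun ⟨j, w⟩ ⟨j', w'⟩ h => ?_, ?_⟩
  · have hj : j = j' := by simpa using congrArg (· (Fin.last N)) h
    subst hj
    have hw : w = w' := Equiv.ext fun v => by simpa using congrArg (· v.castSucc) h
    rw [hw]
  · simp [Fintype.card_perm, Nat.factorial_succ]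

theorem sum_filter_perm_succ {M : Type*} [AddCommMonoid M]
    (P : Equiv.Perm (Fin (N + 1)) → Prop) (f : Equiv.Perm (Fin (N + 1)) → M) :
    ∑ w ∈ univ.filter P, f w =
      ∑ j, ∑ w ∈ univ.filter (fun w => P (insertLabel j w)), f (insertLabel j w) := by
  simp only [sum_filter]
  rw [← Fintype.sum_prod_type']
  exact (Fintype.sum_bijective _ bijective_insertLabel _ _ fun _ => rfl).symm

end RemoveLast

theorem sum_filter_eq_of_sum_fiber_eq {α β M : Type*} [Fintype α] [AddCommMonoid M]
    (π : α → β) {p : α → Prop} (hp : ∀ x y, π x = π y → (p x ↔ p y)) {f g : α → M}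
    (h : ∀ x, ∑ y ∈ univ.filter (π · = π x), f y = ∑ y ∈ univ.filter (π · = π x), g y) :
    ∑ x ∈ univ.filter p, f x = ∑ x ∈ univ.filter p, g x := by
  have hmaps : ∀ x ∈ univ.filter p, π x ∈ (univ.filter p).image π :=
    fun x hx => mem_image_of_mem π hx
  rw [← sum_fiberwise_of_maps_to hmaps, ← sum_fiberwise_of_maps_to hmaps]
  refine sum_congr rfl fun b hb => ?_
  obtain ⟨x, hx, rfl⟩ := mem_image.1 hb
  have hfiber : (univ.filter p).filter (π · = π x) = univ.filter (π · = π x) := by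
    ext y
    simp only [mem_filter, mem_univ, true_and, and_iff_right_iff_imp]
    exact fun hy => (hp y x hy).2 (mem_filter.1 hx).2
  rw [hfiber]
  exact h x

section Colouring

variable {m : ℕ} {ι : Type*}

noncomputable def colourLabels (κ : Fin m → ι) (w : Equiv.Perm (Fin m)) (i : ι) :
    Finset (Fin m) :=
  (univ.filter fun v => κ v = i).image w

noncomputable def colourClass (κ : Fin m → ι) (C : ι → Finset (Fin m)) :
    Finset (Equiv.Perm (Fin m)) :=
  univ.filter fun w => colourLabels κ w = C

theorem colourLabels_mul_of_forall_notMem {κ : Fin m → ι} {w σ : Equiv.Perm (Fin m)} {i₀ : ι}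
    (hσ : ∀ a ∉ colourLabels κ w i₀, σ a = a) : colourLabels κ (σ * w) = colourLabels κ w := by
  funext i
  have himage : colourLabels κ (σ * w) i = (colourLabels κ w i).image σ := by
    simp only [colourLabels, Equiv.Perm.coe_mul, image_image]
  rw [himage]
  by_cases hi : i = i₀
  · subst hi
    simpa [map_eq_image] using map_perm (s := colourLabels κ w i)
      fun a ha => by_contra fun h => ha (hσ a h)
  · refine (image_congr fun a ha => hσ a ?_).trans image_id'
    simp only [colourLabels, mem_coe, mem_image, mem_filter, mem_univ, true_and] at ha ⊢
    obtain ⟨v, hv, rfl⟩ := ha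
    rintro ⟨v', hv', hw⟩
    exact hi (hv.symm.trans (w.injective hw ▸ hv'))

theorem sum_colourClass_mul {M : Type*} [AddCommMonoid M] (κ : Fin m → ι)
    (C : ι → Finset (Fin m)) {σ : Equiv.Perm (Fin m)} {i₀ : ι} (hσ : ∀ a ∉ C i₀, σ a = a)
    (f : Equiv.Perm (Fin m) → M) :
    ∑ w ∈ colourClass κ C, f (σ * w) = ∑ w ∈ colourClass κ C, f w := by
  have hσ' : ∀ a ∉ C i₀, σ⁻¹ a = a := fun a ha => Equiv.Perm.inv_eq_iff_eq.2 (hσ a ha).symm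
  refine sum_equiv (Equiv.mulLeft σ) (fun w => ?_) fun _ _ => rfl
  simp only [colourClass, mem_filter, mem_univ, true_and, Equiv.coe_mulLeft]
  refine ⟨fun hw => ?_, fun hw => ?_⟩
  · rw [colourLabels_mul_of_forall_notMem (hw ▸ hσ), hw]
  · rw [← inv_mul_cancel_left σ w, colourLabels_mul_of_forall_notMem (hw ▸ hσ'), hw]

end Colouring

section RestrictColour

variable {N : ℕ} {r : Fin (N + 1) → Fin (N + 1) → Prop} {ι : Type*}

noncomputable def restrictColour (r : Fin (N + 1) → Fin (N + 1) → Prop) (κ : Fin (N + 1) → ι) :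
    Fin N → Option ι :=
  fun u => if u ∈ subtreeLast r then none else some (κ u.castSucc)

theorem restrictColour_eq_of_rel (hF : IsForest r) {κ : Fin (N + 1) → ι}
    (hκ : ∀ u v, r u v → κ u = κ v) {u v : Fin N} (h : dropLast r u v) :
    restrictColour r κ u = restrictColour r κ v := by
  simp only [restrictColour, mem_subtreeLast_iff_of_rel hF h, hκ _ _ h]

theorem restrictColour_eq_some_iff {κ : Fin (N + 1) → ι} {u : Fin N} {i : ι} :
    restrictColour r κ u = some i ↔ u ∉ subtreeLast r ∧ κ u.castSucc = i := by
  by_cases hu : u ∈ subtreeLast r <;> simp [restrictColour, hu]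

theorem colourLabels_restrictColour_none (κ : Fin (N + 1) → ι) (w : Equiv.Perm (Fin N)) :
    colourLabels (restrictColour r κ) w none = (subtreeLast r).image w := by
  rw [colourLabels]
  congr 1
  ext u
  by_cases hu : u ∈ subtreeLast r <;> simp [restrictColour, hu]

theorem colourLabels_insertLabel {κ : Fin (N + 1) → ι} (hκ : ∀ u v, r u v → κ u = κ v)
    (j : Fin (N + 1)) (w : Equiv.Perm (Fin N)) (i : ι) :
    colourLabels κ (insertLabel j w) i =
      (if κ (Fin.last N) = i then
        insert j ((colourLabels (restrictColour r κ) w none).image j.succAbove) else ∅) ∪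
      (colourLabels (restrictColour r κ) w (some i)).image j.succAbove := by
  have hsub : ∀ a ∈ subtreeLast r, κ a.castSucc = κ (Fin.last N) :=
    fun a ha => hκ _ _ (mem_filter.1 ha).2
  ext x
  rw [colourLabels_restrictColour_none]
  simp only [colourLabels, mem_union, mem_image, mem_filter, mem_univ, true_and,
    Fin.exists_fin_succ', insertLabel_castSucc, insertLabel_last, restrictColour_eq_some_iff,
    exists_exists_and_eq_and]
  by_cases hi : κ (Fin.last N) = i
  · simp only [hi, if_true, true_and, mem_insert, mem_image, exists_exists_and_eq_and]
    constructor
    · rintro (⟨a, ha, rfl⟩ | rfl)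
      · by_cases haE : a ∈ subtreeLast r
        · exact Or.inl (Or.inr ⟨a, haE, rfl⟩)
        · exact Or.inr ⟨a, ⟨haE, ha⟩, rfl⟩
      · exact Or.inl (Or.inl rfl)
    · rintro ((rfl | ⟨a, haE, rfl⟩) | ⟨a, ⟨-, ha⟩, rfl⟩)
      · exact Or.inr rfl
      · exact Or.inl ⟨a, (hsub a haE).trans hi, rfl⟩
      · exact Or.inl ⟨a, ha, rfl⟩
  · simp only [hi, if_false, notMem_empty, false_or, false_and, or_false]
    refine exists_congr fun a => and_congr_left fun _ =>
      ⟨fun ha => ⟨fun haE => hi ((hsub a haE).symm.trans ha), ha⟩, And.right⟩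

theorem sum_colourClass_pow_majF_insertLabel_eq_invF {R : Type*} [CommRing R] (hF : IsForest r)
    (q : R) (κ : Fin (N + 1) → ι) (j : Fin (N + 1)) (C : Option ι → Finset (Fin N))
    (IH : ∑ w ∈ colourClass (restrictColour r κ) C, q ^ majF (dropLast r) w =
      ∑ w ∈ colourClass (restrictColour r κ) C, q ^ invF (dropLast r) w) :
    ∑ w ∈ colourClass (restrictColour r κ) C, q ^ majF r (insertLabel j w) =
      ∑ w ∈ colourClass (restrictColour r κ) C, q ^ invF r (insertLabel j w) := by
  obtain ⟨σ, hσ, hmaj⟩ := exists_perm_majF_mul_add_card hF.dropLast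
    (fun _ _ => mem_subtreeLast_iff_of_rel hF) (C none) j
  have himage : ∀ w ∈ colourClass (restrictColour r κ) C, (subtreeLast r).image w = C none :=
    fun w hw => by rw [← colourLabels_restrictColour_none κ, (mem_filter.1 hw).2]
  have hcard : ∀ w ∈ colourClass (restrictColour r κ) C,
      #((subtreeLast r).filter fun u => (j : ℕ) ≤ w u) =
        #((C none).filter fun b : Fin N => (j : ℕ) ≤ b) :=
    fun w hw => by rw [← himage w hw, filter_image, card_image_of_injective _ w.injective]
  calc ∑ w ∈ colourClass (restrictColour r κ) C, q ^ majF r (insertLabel j w)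
      = ∑ w ∈ colourClass (restrictColour r κ) C, q ^ majF (dropLast r) (σ * w) *
          q ^ #((C none).filter fun b : Fin N => (j : ℕ) ≤ b) := sum_congr rfl fun w hw => by
        rw [majF_insertLabel hF, ← hmaj w (himage w hw), hcard w hw, pow_add]
    _ = ∑ w ∈ colourClass (restrictColour r κ) C, q ^ invF (dropLast r) w *
          q ^ #((C none).filter fun b : Fin N => (j : ℕ) ≤ b) := by
        rw [← sum_mul, ← sum_mul, sum_colourClass_mul _ C hσ fun w => q ^ majF _ w, IH]
    _ = _ := sum_congr rfl fun w hw => by rw [invF_insertLabel hF, hcard w hw, pow_add]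

end RestrictColour

theorem sum_colourClass_pow_majF_eq_invF {R : Type*} [CommRing R] (q : R) {m : ℕ}
    {r : Fin m → Fin m → Prop} (hF : IsForest r) {ι : Type*} (κ : Fin m → ι)
    (hκ : ∀ u v, r u v → κ u = κ v) (C : ι → Finset (Fin m)) :
    ∑ w ∈ colourClass κ C, q ^ majF r w = ∑ w ∈ colourClass κ C, q ^ invF r w := by
  induction m generalizing ι with
  | zero => exact sum_congr rfl fun w _ => by simp [majF, invF]
  | succ N ih =>
    rw [colourClass, sum_filter_perm_succ, sum_filter_perm_succ]
    refine sum_congr rfl fun j _ => sum_filter_eq_of_sum_fiber_eq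
      (colourLabels (restrictColour r κ))
      (fun w w' h => by simp only [funext (colourLabels_insertLabel hκ j _), h]) fun w => ?_
    exact sum_colourClass_pow_majF_insertLabel_eq_invF hF q κ j _
      (ih hF.dropLast _ (fun _ _ => restrictColour_eq_of_rel hF hκ) _)

/-- The major index is equidistributed with the inversion number over labelings of a forest. -/
theorem stmt2 (n : ℕ) (r : Fin n → Fin n → Prop) (hF : IsForest r)
    (R : Type*) [CommRing R] (q : R) :
    ∑ w : Equiv.Perm (Fin n), q ^ majF r w = ∑ w : Equiv.Perm (Fin n), q ^ invF r w := by
  have hclass : colourClass (fun _ : Fin n => ()) (fun _ => univ) = univ := by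
    ext w
    simpa [colourClass] using funext fun _ => by simp [colourLabels, image_univ_equiv]
  simpa [hclass] using
    sum_colourClass_pow_majF_eq_invF q hF (fun _ => ()) (fun _ _ _ => rfl) fun _ => univ
end

section
/- For a forest F of size n, ∑_{w ∈ W(F)} q^{inv(F,w)} ∏_{v ∈ Btmax(F,w)} t_v = (n!/∏_v h_v) · ∏_v ([h_v]_q − 1 + t_v). -/
open Finset

open scoped Classical

/-!
Write `inv(F, w) = ∑_v c_v(w)`, where `c_v(w)` counts the vertices strictly below `v` carrying a
larger label. Then `v ∈ Btmax(F, w)` iff `c_v(w) = 0`, so the summand is the product over `v` of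
`q ^ c_v` times `t_v` if `c_v = 0`. The code `c(w)` takes every value in `∏_v [0, h_v)` exactly
`n! / ∏_v h_v` times, so the sum factors as `n! / ∏_v h_v · ∏_v (t_v + q + ⋯ + q ^ (h_v - 1))`.

Equidistribution of the code is proved by induction, removing the last vertex `ρ`, which is a
root. Labelings of all vertices are labelings of the others together with a label for `ρ`, and the
fibres of `c_ρ` all have the same size: exchanging the label of `ρ` with the next larger label in
its subtree lowers `c_ρ` by one and keeps the relative order of labels inside every other subtree.
-/

section Neighbours

variable {α : Type*} [LinearOrder α]

theorem swap_lt_swap_iff {a b x y : α} (hx : x ≠ a) (hy : y ≠ a) (hx' : x ∉ Set.uIoo a b)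
    (hy' : y ∉ Set.uIoo a b) : Equiv.swap a b x < Equiv.swap a b y ↔ x < y := by
  rw [Equiv.swap_apply_def, Equiv.swap_apply_def]
  rcases le_total a b with h | h <;>
    simp only [Set.uIoo_of_le, Set.uIoo_of_ge, h, Set.mem_Ioo] at hx' hy' <;> grind

theorem image_swap_eq_self {K : Finset α} {a b : α} (ha : a ∈ K) (hb : b ∈ K) :
    K.image (Equiv.swap a b) = K := by
  refine eq_of_subset_of_card_le (fun y hy => ?_) (card_image_of_injective _ (Equiv.injective _)).ge
  obtain ⟨x, hx, rfl⟩ := mem_image.mp hy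
  rw [Equiv.swap_apply_def]
  split_ifs <;> assumption

/-- Defaults to `a` when `K` has no element above `a`. -/
def nextAbove (K : Finset α) (a : α) : α :=
  if h : (K.filter (a < ·)).Nonempty then (K.filter (a < ·)).min' h else a

/-- Defaults to `a` when `K` has no element below `a`. -/
def nextBelow (K : Finset α) (a : α) : α :=
  if h : (K.filter (· < a)).Nonempty then (K.filter (· < a)).max' h else a

variable {K : Finset α} {a b : α}

theorem nextAbove_spec (h : ∃ x ∈ K, a < x) :
    nextAbove K a ∈ K ∧ a < nextAbove K a ∧ ∀ x ∈ K, x ∉ Set.uIoo a (nextAbove K a) := by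
  have hne : (K.filter (a < ·)).Nonempty := by simpa [Finset.Nonempty] using h
  have hmem := mem_filter.mp (min'_mem _ hne)
  rw [nextAbove, dif_pos hne]
  refine ⟨hmem.1, hmem.2, fun x hx hmid => ?_⟩
  rw [Set.uIoo_of_le hmem.2.le, Set.mem_Ioo] at hmid
  exact (min'_le _ x (mem_filter.mpr ⟨hx, hmid.1⟩)).not_gt hmid.2

theorem nextBelow_spec (h : ∃ x ∈ K, x < a) :
    nextBelow K a ∈ K ∧ nextBelow K a < a ∧ ∀ x ∈ K, x ∉ Set.uIoo a (nextBelow K a) := by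
  have hne : (K.filter (· < a)).Nonempty := by simpa [Finset.Nonempty] using h
  have hmem := mem_filter.mp (max'_mem _ hne)
  rw [nextBelow, dif_pos hne]
  refine ⟨hmem.1, hmem.2, fun x hx hmid => ?_⟩
  rw [Set.uIoo_of_ge hmem.2.le, Set.mem_Ioo] at hmid
  exact (le_max' _ x (mem_filter.mpr ⟨hx, hmid.2⟩)).not_gt hmid.1

theorem nextAbove_eq (hb : b ∈ K) (hab : a < b) (hgap : ∀ x ∈ K, x ∉ Set.uIoo a b) :
    nextAbove K a = b := by
  obtain ⟨hmem, hlt, hgap'⟩ := nextAbove_spec ⟨b, hb, hab⟩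
  by_contra hne
  rcases lt_or_gt_of_ne hne with h | h
  · exact hgap _ hmem (Set.mem_uIoo_of_lt hlt h)
  · exact hgap' _ hb (Set.mem_uIoo_of_lt hab h)

theorem nextBelow_eq (hb : b ∈ K) (hba : b < a) (hgap : ∀ x ∈ K, x ∉ Set.uIoo a b) :
    nextBelow K a = b := by
  obtain ⟨hmem, hlt, hgap'⟩ := nextBelow_spec ⟨b, hb, hba⟩
  by_contra hne
  rcases lt_or_gt_of_ne hne with h | h
  · exact hgap' _ hb (Set.mem_uIoo_of_gt h hba)
  · exact hgap _ hmem (Set.mem_uIoo_of_gt h hlt)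

theorem card_filter_lt_eq_succ (hb : b ∈ K) (hab : a < b) (hgap : ∀ x ∈ K, x ∉ Set.uIoo a b) :
    #(K.filter (a < ·)) = #(K.filter (b < ·)) + 1 := by
  have : K.filter (a < ·) = insert b (K.filter (b < ·)) := by
    ext x
    have := hgap x
    simp only [Set.uIoo_of_le hab.le, Set.mem_Ioo] at this
    simp only [mem_filter, mem_insert]
    grind
  rw [this, card_insert_of_notMem (by simp)]

end Neighbours

section InvCode

variable {n : ℕ} (r : Fin n → Fin n → Prop)

noncomputable def invCode (w : Equiv.Perm (Fin n)) (v : Fin n) : ℕ :=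
  #{u | strictR r u v ∧ w v < w u}

theorem invF_eq_sum_invCode (w : Equiv.Perm (Fin n)) : invF r w = ∑ v, invCode r w v := by
  rw [invF, card_filter, Fintype.sum_prod_type, sum_comm]
  simp only [invCode, card_filter]

theorem btmaxF_eq_filter_invCode_eq_zero (w : Equiv.Perm (Fin n)) :
    BtmaxF r w = univ.filter (invCode r w · = 0) := by
  refine filter_congr fun v _ => ?_
  rw [invCode, card_eq_zero, filter_eq_empty_iff]
  simp only [mem_univ, forall_const, not_and, not_lt]
  exact forall_congr' fun u => imp_congr_right fun huv =>
    ⟨le_of_lt, fun h => lt_of_le_of_ne h (w.injective.ne huv.2)⟩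

variable {r}

theorem invCode_lt_hook (hF : IsForest r) (w : Equiv.Perm (Fin n)) (v : Fin n) :
    invCode r w v < hook r v := by
  refine card_lt_card ((ssubset_iff_of_subset fun u hu => ?_).mpr ⟨v, ?_, ?_⟩)
  · simp only [mem_filter, mem_univ, true_and] at hu ⊢
    exact hu.1.1
  · simp only [mem_filter, mem_univ, true_and]
    exact hF.1.refl v
  · exact fun h => (mem_filter.mp h).2.1.2 rfl

noncomputable def subtreeLabels (r : Fin n → Fin n → Prop) (ρ : Fin n) (w : Equiv.Perm (Fin n)) :
    Finset (Fin n) :=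
  (univ.filter (r · ρ)).image w

variable {ρ : Fin n} {w : Equiv.Perm (Fin n)}

theorem apply_mem_subtreeLabels_iff {x : Fin n} : w x ∈ subtreeLabels r ρ w ↔ r x ρ := by
  simp [subtreeLabels]

theorem card_subtreeLabels : #(subtreeLabels r ρ w) = hook r ρ :=
  card_image_of_injective _ w.injective

theorem invCode_eq_card_subtreeLabels :
    invCode r w ρ = #((subtreeLabels r ρ w).filter (w ρ < ·)) := by
  rw [subtreeLabels, filter_image, card_image_of_injective _ w.injective, invCode, filter_filter]
  congr 1
  refine filter_congr fun u _ => ⟨fun h => ⟨h.1.1, h.2⟩, fun h => ⟨⟨h.1, ?_⟩, h.2⟩⟩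
  rintro rfl
  exact lt_irrefl _ h.2

theorem mem_subtree_iff_of_strictR (hF : IsForest r) (hρ : ∀ v, r ρ v → v = ρ) {u v : Fin n}
    (huv : strictR r u v) (hv : v ≠ ρ) : r u ρ ↔ r v ρ := by
  refine ⟨fun hu => ?_, fun hvρ => hF.1.trans _ _ _ huv.1 hvρ⟩
  rcases hF.2.1 u v ρ huv.1 hu with h | h
  · exact h
  · exact absurd (hρ v h) hv

theorem subtreeLabels_swap_mul (hF : IsForest r) {b : Fin n} (hb : b ∈ subtreeLabels r ρ w) :
    subtreeLabels r ρ (Equiv.swap (w ρ) b * w) = subtreeLabels r ρ w := by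
  rw [subtreeLabels, Equiv.Perm.coe_mul, ← image_image, ← subtreeLabels]
  exact image_swap_eq_self (apply_mem_subtreeLabels_iff.mpr (hF.1.refl ρ)) hb

theorem invCode_swap_mul_root (hF : IsForest r) {b : Fin n} (hb : b ∈ subtreeLabels r ρ w) :
    invCode r (Equiv.swap (w ρ) b * w) ρ = #((subtreeLabels r ρ w).filter (b < ·)) := by
  rw [invCode_eq_card_subtreeLabels, subtreeLabels_swap_mul hF hb, Equiv.Perm.mul_apply,
    Equiv.swap_apply_left]

theorem invCode_swap_mul_of_ne (hF : IsForest r) (hρ : ∀ v, r ρ v → v = ρ) {b : Fin n}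
    (hb : b ∈ subtreeLabels r ρ w) (hgap : ∀ x ∈ subtreeLabels r ρ w, x ∉ Set.uIoo (w ρ) b)
    {v : Fin n} (hv : v ≠ ρ) : invCode r (Equiv.swap (w ρ) b * w) v = invCode r w v := by
  unfold invCode
  congr 1
  refine filter_congr fun u _ => and_congr_right fun huv => ?_
  have hu : u ≠ ρ := by
    rintro rfl
    exact huv.2 (hρ v huv.1).symm
  simp only [Equiv.Perm.mul_apply]
  by_cases hvρ : r v ρ
  · have huρ := (mem_subtree_iff_of_strictR hF hρ huv hv).mpr hvρ
    exact swap_lt_swap_iff (w.injective.ne hv) (w.injective.ne hu)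
      (hgap _ (apply_mem_subtreeLabels_iff.mpr hvρ)) (hgap _ (apply_mem_subtreeLabels_iff.mpr huρ))
  · have huρ : ¬ r u ρ := fun h => hvρ ((mem_subtree_iff_of_strictR hF hρ huv hv).mp h)
    have hfix : ∀ x, ¬ r x ρ → Equiv.swap (w ρ) b (w x) = w x := fun x hx =>
      have hx' : w x ∉ subtreeLabels r ρ w := fun h => hx (apply_mem_subtreeLabels_iff.mp h)
      Equiv.swap_apply_of_ne_of_ne
        (ne_of_mem_of_not_mem (apply_mem_subtreeLabels_iff.mpr (hF.1.refl ρ)) hx').symm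
        (ne_of_mem_of_not_mem hb hx').symm
    rw [hfix v hvρ, hfix u huρ]

end InvCode

section RootFibers

variable {n : ℕ} {r : Fin n → Fin n → Prop} {ρ : Fin n}

noncomputable def raiseRoot (r : Fin n → Fin n → Prop) (ρ : Fin n) (w : Equiv.Perm (Fin n)) :
    Equiv.Perm (Fin n) :=
  Equiv.swap (w ρ) (nextAbove (subtreeLabels r ρ w) (w ρ)) * w

noncomputable def lowerRoot (r : Fin n → Fin n → Prop) (ρ : Fin n) (w : Equiv.Perm (Fin n)) :
    Equiv.Perm (Fin n) :=
  Equiv.swap (w ρ) (nextBelow (subtreeLabels r ρ w) (w ρ)) * w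

variable {w : Equiv.Perm (Fin n)}

theorem raiseRoot_spec (hF : IsForest r) (hρ : ∀ v, r ρ v → v = ρ) (h : 0 < invCode r w ρ) :
    invCode r (raiseRoot r ρ w) ρ + 1 = invCode r w ρ ∧
      (∀ v ≠ ρ, invCode r (raiseRoot r ρ w) v = invCode r w v) ∧
      lowerRoot r ρ (raiseRoot r ρ w) = w := by
  have hwρ : w ρ ∈ subtreeLabels r ρ w := apply_mem_subtreeLabels_iff.mpr (hF.1.refl ρ)
  rw [invCode_eq_card_subtreeLabels, card_pos] at h
  obtain ⟨x, hx⟩ := h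
  obtain ⟨hb, hab, hgap⟩ := nextAbove_spec ⟨x, (mem_filter.mp hx).1, (mem_filter.mp hx).2⟩
  refine ⟨?_, fun v hv => invCode_swap_mul_of_ne hF hρ hb hgap hv, ?_⟩
  · rw [raiseRoot, invCode_swap_mul_root hF hb, invCode_eq_card_subtreeLabels,
      card_filter_lt_eq_succ hb hab hgap]
  · rw [lowerRoot, raiseRoot, subtreeLabels_swap_mul hF hb, Equiv.Perm.mul_apply,
      Equiv.swap_apply_left, nextBelow_eq hwρ hab fun y hy => Set.uIoo_comm _ (w ρ) ▸ hgap y hy,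
      Equiv.swap_comm, Equiv.swap_mul_self_mul]

theorem lowerRoot_spec (hF : IsForest r) (hρ : ∀ v, r ρ v → v = ρ)
    (h : invCode r w ρ + 1 < hook r ρ) :
    invCode r (lowerRoot r ρ w) ρ = invCode r w ρ + 1 ∧
      (∀ v ≠ ρ, invCode r (lowerRoot r ρ w) v = invCode r w v) ∧
      raiseRoot r ρ (lowerRoot r ρ w) = w := by
  have hwρ : w ρ ∈ subtreeLabels r ρ w := apply_mem_subtreeLabels_iff.mpr (hF.1.refl ρ)
  have hbelow : ∃ x ∈ subtreeLabels r ρ w, x < w ρ := by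
    by_contra! hnone
    have hsub : (subtreeLabels r ρ w).erase (w ρ) ⊆ (subtreeLabels r ρ w).filter (w ρ < ·) :=
      fun x hx => mem_filter.mpr ⟨mem_of_mem_erase hx,
        lt_of_le_of_ne (hnone x (mem_of_mem_erase hx)) (ne_of_mem_erase hx).symm⟩
    have := card_le_card hsub
    rw [card_erase_of_mem hwρ, card_subtreeLabels, ← invCode_eq_card_subtreeLabels] at this
    omega
  obtain ⟨hb, hba, hgap⟩ := nextBelow_spec hbelow
  have hgap' := fun y hy => Set.uIoo_comm (w ρ) _ ▸ hgap y hy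
  refine ⟨?_, fun v hv => invCode_swap_mul_of_ne hF hρ hb hgap hv, ?_⟩
  · rw [lowerRoot, invCode_swap_mul_root hF hb, invCode_eq_card_subtreeLabels,
      card_filter_lt_eq_succ hwρ hba hgap']
  · rw [lowerRoot, raiseRoot, subtreeLabels_swap_mul hF hb, Equiv.Perm.mul_apply,
      Equiv.swap_apply_left, nextAbove_eq hwρ hba hgap', Equiv.swap_comm, Equiv.swap_mul_self_mul]

theorem card_fiber_update_succ (hF : IsForest r) (hρ : ∀ v, r ρ v → v = ρ) (c : Fin n → ℕ)
    {j : ℕ} (hj : j + 1 < hook r ρ) :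
    #{w | invCode r w = Function.update c ρ (j + 1)} =
      #{w | invCode r w = Function.update c ρ j} := by
  simp only [Function.eq_update_iff]
  refine card_nbij' (raiseRoot r ρ) (lowerRoot r ρ) ?_ ?_ ?_ ?_ <;>
    rintro w hw <;> simp only [coe_filter, mem_univ, true_and, Set.mem_ofPred_eq] at hw ⊢ <;>
    obtain ⟨hwρ, hwv⟩ := hw
  · obtain ⟨h1, h2, -⟩ := raiseRoot_spec (w := w) hF hρ (by omega)
    exact ⟨by omega, fun v hv => (h2 v hv).trans (hwv v hv)⟩
  · obtain ⟨h1, h2, -⟩ := lowerRoot_spec (w := w) hF hρ (by omega)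
    exact ⟨by omega, fun v hv => (h2 v hv).trans (hwv v hv)⟩
  · exact (raiseRoot_spec (w := w) hF hρ (by omega)).2.2
  · exact (lowerRoot_spec (w := w) hF hρ (by omega)).2.2

theorem card_fiber_update_eq (hF : IsForest r) (hρ : ∀ v, r ρ v → v = ρ) (c : Fin n → ℕ)
    {j : ℕ} (hj : j < hook r ρ) :
    #{w | invCode r w = Function.update c ρ j} = #{w | invCode r w = Function.update c ρ 0} := by
  induction j with
  | zero => rfl
  | succ j ih => rw [card_fiber_update_succ hF hρ c hj, ih (by omega)]

theorem card_fiber_forget_root (hF : IsForest r) (hρ : ∀ v, r ρ v → v = ρ) (c : Fin n → ℕ)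
    (hc : c ρ < hook r ρ) :
    #{w | ∀ v ≠ ρ, invCode r w v = c v} = hook r ρ * #{w | invCode r w = c} := by
  rw [card_eq_sum_card_fiberwise (f := (invCode r · ρ)) (t := range (hook r ρ))
    fun w _ => mem_range.mpr (invCode_lt_hook hF w ρ)]
  have hfiber : ∀ j ∈ range (hook r ρ),
      #{w ∈ {w | ∀ v ≠ ρ, invCode r w v = c v} | invCode r w ρ = j} =
        #{w | invCode r w = c} := by
    intro j hj
    have hself := card_fiber_update_eq hF hρ c hc
    rw [Function.update_eq_self] at hself
    rw [hself, ← card_fiber_update_eq hF hρ c (mem_range.mp hj), filter_filter]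
    simp only [Function.eq_update_iff, and_comm]
  rw [sum_congr rfl hfiber, sum_const, card_range, smul_eq_mul]

end RootFibers

section LastVertex

variable {n : ℕ} {r : Fin (n + 1) → Fin (n + 1) → Prop}

theorem eq_last_of_rel_last (hF : IsForest r) {v : Fin (n + 1)} (h : r (Fin.last n) v) :
    v = Fin.last n :=
  Fin.last_le_iff.mp (hF.2.2 _ _ h)

theorem isForest_onFun_castSucc (hF : IsForest r) : IsForest (Function.onFun r Fin.castSucc) := by
  obtain ⟨hPO, hchain, hle⟩ := hF
  refine ⟨{ refl := fun a => hPO.refl a.castSucc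
            trans := fun a b c h1 h2 => hPO.trans _ _ _ h1 h2
            antisymm := fun a b h1 h2 => Fin.castSucc_inj.mp (hPO.antisymm _ _ h1 h2) },
    fun v u u' h1 h2 => hchain _ _ _ h1 h2,
    fun u v huv => Fin.castSucc_le_castSucc_iff.mp (hle _ _ huv)⟩

theorem card_filter_eq_card_filter_castSucc {p : Fin (n + 1) → Prop} [DecidablePred p]
    (h : ¬ p (Fin.last n)) : #{u | p u} = #{i : Fin n | p i.castSucc} := by
  rw [card_filter, card_filter, Fin.sum_univ_castSucc, if_neg h, add_zero]

theorem hook_onFun_castSucc (hF : IsForest r) (v : Fin n) :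
    hook (Function.onFun r Fin.castSucc) v = hook r v.castSucc := by
  rw [hook, hook, card_filter_eq_card_filter_castSucc (p := (r · v.castSucc)) fun h =>
    (Fin.castSucc_lt_last v).ne (eq_last_of_rel_last hF h)]

def insertLast (w : Equiv.Perm (Fin n)) (k : Fin (n + 1)) : Equiv.Perm (Fin (n + 1)) :=
  (finSuccEquiv' (Fin.last n)).trans ((Equiv.optionCongr w).trans (finSuccEquiv' k).symm)

@[simp] theorem insertLast_last (w : Equiv.Perm (Fin n)) (k : Fin (n + 1)) :
    insertLast w k (Fin.last n) = k := by
  simp [insertLast]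

@[simp] theorem insertLast_castSucc (w : Equiv.Perm (Fin n)) (k : Fin (n + 1)) (i : Fin n) :
    insertLast w k i.castSucc = k.succAbove (w i) := by
  rw [← Fin.succAbove_last]
  simp only [insertLast, Equiv.trans_apply, finSuccEquiv'_succAbove, Equiv.optionCongr_apply,
    Option.map_some, finSuccEquiv'_symm_some]

theorem insertLast_bijective :
    Function.Bijective fun p : Equiv.Perm (Fin n) × Fin (n + 1) => insertLast p.1 p.2 := by
  rw [Fintype.bijective_iff_injective_and_card]
  refine ⟨fun ⟨w, k⟩ ⟨w', k'⟩ h => ?_, by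
    simp [Fintype.card_perm, Nat.factorial_succ, mul_comm]⟩
  have hk : k = k' := by simpa using congrArg (· (Fin.last n)) h
  subst hk
  have hw : w = w' := Equiv.ext fun i => by simpa using congrArg (· i.castSucc) h
  rw [hw]

theorem invCode_insertLast_castSucc (hF : IsForest r) (w : Equiv.Perm (Fin n)) (k : Fin (n + 1))
    (v : Fin n) :
    invCode r (insertLast w k) v.castSucc = invCode (Function.onFun r Fin.castSucc) w v := by
  rw [invCode, invCode, card_filter_eq_card_filter_castSucc fun h =>
    (Fin.castSucc_lt_last v).ne (eq_last_of_rel_last hF h.1.1)]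
  congr 1
  ext u
  rw [mem_filter, mem_filter]
  simp [strictR, Function.onFun, Fin.succAbove_lt_succAbove_iff]

theorem card_fiber_forget_last (hF : IsForest r) (c : Fin (n + 1) → ℕ) :
    #{w | ∀ v ≠ Fin.last n, invCode r w v = c v} =
      (n + 1) * #{w | invCode (Function.onFun r Fin.castSucc) w = fun i => c i.castSucc} := by
  rw [← card_equiv (Equiv.ofBijective _ insertLast_bijective)
      (s := univ.filter (fun w => invCode (Function.onFun r Fin.castSucc) w = fun i => c i.castSucc)
        ×ˢ univ),
    card_product, card_univ, Fintype.card_fin, mul_comm]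
  rintro ⟨w, k⟩
  simp [Fin.forall_fin_succ', invCode_insertLast_castSucc hF, funext_iff]

end LastVertex

theorem hook_pos {n : ℕ} {r : Fin n → Fin n → Prop} (hF : IsForest r) (v : Fin n) :
    0 < hook r v :=
  card_pos.mpr ⟨v, mem_filter.mpr ⟨mem_univ v, hF.1.refl v⟩⟩

theorem hook_prod_mul_card_fiber {n : ℕ} {r : Fin n → Fin n → Prop} (hF : IsForest r)
    {c : Fin n → ℕ} (hc : ∀ v, c v < hook r v) :
    (∏ v, hook r v) * #{w | invCode r w = c} = n.factorial := by
  induction n with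
  | zero =>
    simp [funext_iff]
  | succ n ih =>
    have hroot := card_fiber_forget_root hF (fun _ => eq_last_of_rel_last hF) c (hc (Fin.last n))
    rw [card_fiber_forget_last hF] at hroot
    have hinit := ih (isForest_onFun_castSucc hF) fun i =>
      (hook_onFun_castSucc hF i).symm ▸ hc i.castSucc
    simp only [hook_onFun_castSucc hF] at hinit
    rw [Fin.prod_univ_castSucc, mul_assoc, ← hroot, Nat.factorial_succ, ← hinit]
    ring

theorem card_fiber_invCode {n : ℕ} {r : Fin n → Fin n → Prop} (hF : IsForest r)
    {c : Fin n → ℕ} (hc : ∀ v, c v < hook r v) :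
    #{w | invCode r w = c} = n.factorial / ∏ v, hook r v :=
  (Nat.div_eq_of_eq_mul_left (prod_pos fun v _ => hook_pos hF v)
    (by rw [mul_comm, hook_prod_mul_card_fiber hF hc])).symm

theorem sum_comp_eq_nsmul_of_card_fiber {ι κ M : Type*} [Fintype ι] [DecidableEq κ]
    [AddCommMonoid M] {f : ι → κ} {t : Finset κ} {N : ℕ} (hf : ∀ i, f i ∈ t)
    (hN : ∀ c ∈ t, #{i | f i = c} = N) (g : κ → M) :
    ∑ i, g (f i) = N • ∑ c ∈ t, g c := by
  rw [← sum_fiberwise_of_maps_to (fun i _ => hf i), smul_sum]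
  refine sum_congr rfl fun c hc => ?_
  rw [sum_congr rfl fun i hi => by rw [(mem_filter.mp hi).2], sum_const, hN c hc]

theorem pow_invF_mul_prod_btmaxF {n : ℕ} (r : Fin n → Fin n → Prop) {R : Type*} [CommRing R]
    (q : R) (t : Fin n → R) (w : Equiv.Perm (Fin n)) :
    q ^ invF r w * ∏ v ∈ BtmaxF r w, t v =
      ∏ v, q ^ invCode r w v * if invCode r w v = 0 then t v else 1 := by
  rw [invF_eq_sum_invCode, ← prod_pow_eq_pow_sum, btmaxF_eq_filter_invCode_eq_zero, prod_filter,
    prod_mul_distrib]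

theorem sum_range_pow_mul_ite {R : Type*} [CommRing R] (q s : R) {m : ℕ} (hm : 0 < m) :
    ∑ j ∈ range m, q ^ j * (if j = 0 then s else 1) = qInt q m - 1 + s := by
  obtain ⟨m, rfl⟩ := Nat.exists_eq_add_of_lt hm
  rw [qInt, zero_add, sum_range_succ', sum_range_succ']
  simp only [Nat.succ_ne_zero, if_false, mul_one, pow_zero, if_true, one_mul]
  ring

/-- Joint distribution of `(inv, Btmax)` over labelings of a forest. -/
theorem stmt9 (n : ℕ) (r : Fin n → Fin n → Prop) (hF : IsForest r)
    (R : Type*) [CommRing R] (q : R) (t : Fin n → R) :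
    ∑ w : Equiv.Perm (Fin n), q ^ invF r w * ∏ v ∈ BtmaxF r w, t v
      = ((n.factorial / ∏ v : Fin n, hook r v : ℕ) : R) *
          ∏ v : Fin n, (qInt q (hook r v) - 1 + t v) := by
  have hcodes : ∀ w, invCode r w ∈ Fintype.piFinset fun v => range (hook r v) := fun w =>
    Fintype.mem_piFinset.mpr fun v => mem_range.mpr (invCode_lt_hook hF w v)
  have hfibers : ∀ c ∈ Fintype.piFinset fun v => range (hook r v),
      #{w | invCode r w = c} = n.factorial / ∏ v, hook r v := fun c hc =>
    card_fiber_invCode hF fun v => mem_range.mp (Fintype.mem_piFinset.mp hc v)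
  simp only [pow_invF_mul_prod_btmaxF]
  rw [sum_comp_eq_nsmul_of_card_fiber hcodes hfibers
      fun c => ∏ v, q ^ c v * if c v = 0 then t v else 1, nsmul_eq_mul,
    ← prod_congr rfl fun v _ => sum_range_pow_mul_ite q (t v) (hook_pos hF v), prod_univ_sum]
end

section
/- Let F be a linear tree (a chain) of size n, let w be a signed labeling of F, and let σ = w(v_1)···w(v_n) be the corresponding signed permutation. Then Btmax_B(F,w), read as a set of positions {i : v_i ∈ Btmax_B(F,w)}, equals Rlmin_B(σ^{-1}). -/
open Finset

open scoped Classical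

/-!
Write `w(v_i) = ±(σ i + 1)`. The inverse signed permutation `ginv w` sends `k` to
`±(σ⁻¹ k + 1)`, with the sign of `w` at `σ⁻¹ k`. On positive entries the two conditions read
`σ j < σ i` for all `j < i`, resp. `σ⁻¹ k < σ⁻¹ j` for all `j > k`, and these match under
`k = σ i`: a left-to-right maximum of a permutation at `i` is a right-to-left minimum of its
inverse at `σ i`, where the recorded value is `σ⁻¹ k + 1 = i + 1`.
-/

theorem Equiv.forall_lt_apply_lt_iff_forall_gt_symm_gt {α β : Type*} [LinearOrder α]
    [LinearOrder β] (σ : α ≃ β) (i : α) :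
    (∀ j, j < i → σ j < σ i) ↔ ∀ k, σ i < k → i < σ.symm k := by
  refine ⟨fun h k hk => ?_, fun h j hj => ?_⟩
  · by_contra! hki
    obtain hki | rfl := hki.lt_or_eq
    · simpa using (h _ hki).trans hk
    · simp at hk
  · by_contra! hji
    obtain hji | hji := hji.lt_or_eq
    · simpa using hj.trans (h _ hji)
    · simp [σ.injective hji] at hj

variable {n : ℕ}

lemma abs_wVal (p : Equiv.Perm (Fin n) × (Fin n → Bool)) (v : Fin n) :
    |wVal p v| = (p.1 v : ℤ) + 1 := by
  rw [wVal, abs_mul, abs_of_nonneg (by positivity : (0 : ℤ) ≤ (p.1 v : ℤ) + 1)]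
  split <;> simp

lemma wVal_pos_iff (p : Equiv.Perm (Fin n) × (Fin n → Bool)) (v : Fin n) :
    0 < wVal p v ↔ p.2 v = false := by
  cases h : p.2 v <;> simp [wVal, h]

lemma ginv_wVal (p : Equiv.Perm (Fin n) × (Fin n → Bool)) :
    ginv (wVal p) = wVal (p.1.symm, p.2 ∘ p.1.symm) := by
  funext k
  have hmax : ((univ.filter fun x => |wVal p x| = (k : ℤ) + 1).max).getD k = p.1.symm k := by
    have hpre : (univ.filter fun x => |wVal p x| = (k : ℤ) + 1) = {p.1.symm k} := by
      ext x
      simp [abs_wVal, Equiv.eq_symm_apply, Fin.ext_iff]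
    rw [hpre, Finset.max_singleton]
    rfl
  simp only [ginv, hmax, wVal_pos_iff]
  cases h : p.2 (p.1.symm k) <;> simp [wVal, h]

lemma wVal_of_snd_eq_false {p : Equiv.Perm (Fin n) × (Fin n → Bool)} {v : Fin n}
    (h : p.2 v = false) : wVal p v = (p.1 v : ℤ) + 1 := by
  simp [wVal, h]

lemma pos_and_forall_lt_abs_wVal_lt_iff (p : Equiv.Perm (Fin n) × (Fin n → Bool)) (i : Fin n) :
    (0 < wVal p i ∧ ∀ j, j < i → |wVal p j| < wVal p i) ↔
      p.2 i = false ∧ ∀ j, j < i → p.1 j < p.1 i := by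
  rw [wVal_pos_iff]
  refine and_congr_right fun h => forall₂_congr fun j _ => ?_
  rw [wVal_of_snd_eq_false h, abs_wVal, Fin.lt_def]
  omega

lemma pos_and_forall_gt_wVal_lt_abs_iff (p : Equiv.Perm (Fin n) × (Fin n → Bool)) (i : Fin n) :
    (0 < wVal p i ∧ ∀ j, i < j → wVal p i < |wVal p j|) ↔
      p.2 i = false ∧ ∀ j, i < j → p.1 i < p.1 j := by
  rw [wVal_pos_iff]
  refine and_congr_right fun h => forall₂_congr fun j _ => ?_
  rw [wVal_of_snd_eq_false h, abs_wVal, Fin.lt_def]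
  omega

/-- For a linear tree (the chain `v_1 <_F ⋯ <_F v_n`) with signed labeling `w` and
corresponding signed permutation `σ = w(v_1)⋯w(v_n)`, the set of positions of signed
bottom-to-top maxima equals `Rlmin_B(σ⁻¹)`. -/
theorem stmt11 (n : ℕ) (p : Equiv.Perm (Fin n) × (Fin n → Bool)) :
    ((Finset.univ.filter fun i : Fin n =>
        0 < wVal p i ∧ ∀ j, j < i → |wVal p j| < wVal p i).image fun i => (i : ℕ) + 1)
      = ((Finset.univ.filter fun i : Fin n =>
          0 < ginv (wVal p) i ∧ ∀ j, i < j → ginv (wVal p) i < |ginv (wVal p) j|).image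
            fun i => (ginv (wVal p) i).toNat) := by
  obtain ⟨σ, ε⟩ := p
  rw [ginv_wVal]
  have hrlmin : (univ.filter fun k : Fin n => 0 < wVal (σ.symm, ε ∘ σ.symm) k ∧
        ∀ j, k < j → wVal (σ.symm, ε ∘ σ.symm) k < |wVal (σ.symm, ε ∘ σ.symm) j|) =
      (univ.filter fun i : Fin n => 0 < wVal (σ, ε) i ∧
        ∀ j, j < i → |wVal (σ, ε) j| < wVal (σ, ε) i).map σ.toEmbedding := by
    ext k
    simp only [mem_map_equiv, mem_filter, mem_univ, true_and,
      pos_and_forall_gt_wVal_lt_abs_iff, pos_and_forall_lt_abs_wVal_lt_iff,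
      σ.forall_lt_apply_lt_iff_forall_gt_symm_gt, Equiv.apply_symm_apply, Function.comp_apply]
  rw [hrlmin, map_eq_image, image_image]
  -- the cast `(i : ℕ)` on the left elaborates as a monadic lift of the whole finset
  simp only [bind_def, pure_def, sup_singleton_apply, image_image]
  refine image_congr fun i hi => ?_
  have hε : ε i = false := ((pos_and_forall_lt_abs_wVal_lt_iff _ i).1 (mem_filter.1 hi).2).1
  simp [wVal, hε]
end
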